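/- arXiv:1904.06277 — 3 statements merged into one kernel-verified Lean document; each statement's English description precedes it below -/
import Mathlib

section
/- Let N ≥ 1 be an integer, ρ > 0, and μ ∈ ℂ with |μ| < ρ. Take θ_j = 2πj/N, so that e^{i N θ_j} = 1. Then for any integer p with 0 ≤ p < N, (1/N) ∑_{j=1}^N (ρ e^{iθ_j})^p · (ρ e^{iθ_j})/(ρ e^{iθ_j} - μ) = μ^p / (1 - (μ/ρ)^N). -/
open Finset Complex

lemma icc_sum_eq_zero {N : ℕ} (w : ℂ) (hw : w ^ N = 1) (h1 : w ≠ 1) :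
    ∑ j ∈ Finset.Icc 1 N, w ^ j = 0 := by
  have hmap : Finset.Icc 1 N = Finset.map ⟨Nat.succ, Nat.succ_injective⟩ (Finset.range N) := by
    ext x
    simp only [Finset.mem_Icc, Finset.mem_map, Finset.mem_range, Function.Embedding.coeFn_mk]
    constructor
    · rintro ⟨h1, h2⟩; exact ⟨x - 1, by omega, by omega⟩
    · rintro ⟨a, ha, rfl⟩; omega
  rw [hmap, Finset.sum_map]
  simp only [Function.Embedding.coeFn_mk, Nat.succ_eq_add_one, pow_succ]
  rw [← Finset.sum_mul, geom_sum_eq h1, hw]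
  simp

theorem stmt2 (N : ℕ) (hN : 0 < N) (ρ : ℝ) (hρ : 0 < ρ) (μ : ℂ)
    (hμ : ‖μ‖ < ρ) (p : ℕ) (hp : p < N)
    (θ : ℕ → ℝ) (hθ : ∀ j, θ j = 2 * Real.pi * j / N) :
    (1 / N : ℂ) * ∑ j ∈ Finset.Icc 1 N,
        ((ρ : ℂ) * Complex.exp (Complex.I * θ j)) ^ p *
          (((ρ : ℂ) * Complex.exp (Complex.I * θ j)) /
            ((ρ : ℂ) * Complex.exp (Complex.I * θ j) - μ))
      = μ ^ p / (1 - (μ / ρ) ^ N) := by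
  have hN0 : (N : ℂ) ≠ 0 := Nat.cast_ne_zero.mpr hN.ne'
  have hρ0 : (ρ : ℂ) ≠ 0 := by exact_mod_cast hρ.ne'
  set ζ : ℂ := Complex.exp (2 * Real.pi * Complex.I / N) with hζdef
  have hprim : IsPrimitiveRoot ζ N := Complex.isPrimitiveRoot_exp N hN.ne'
  have hζN : ζ ^ N = 1 := hprim.pow_eq_one
  -- exp(I θ j) = ζ ^ j
  have hexp : ∀ j : ℕ, Complex.exp (Complex.I * θ j) = ζ ^ j := by
    intro j
    rw [hζdef, ← Complex.exp_nat_mul]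
    congr 1
    rw [hθ j]
    push_cast
    field_simp
  -- z j and its properties
  set z : ℕ → ℂ := fun j => (ρ : ℂ) * ζ ^ j with hzdef
  have hzN : ∀ j, z j ^ N = (ρ : ℂ) ^ N := by
    intro j
    simp only [hzdef, mul_pow, ← pow_mul]
    rw [mul_comm j N, pow_mul, hζN, one_pow, mul_one]
  have hζabs : ‖ζ‖ = 1 := by
    have h : (2 * (Real.pi : ℂ) * Complex.I / N) = ((2 * Real.pi / N : ℝ) : ℂ) * Complex.I := by
      push_cast; ring
    rw [hζdef, h, Complex.norm_exp_ofReal_mul_I]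
  have habsz : ∀ j, ‖z j‖ = ρ := by
    intro j
    simp only [hzdef]
    rw [norm_mul, norm_pow, hζabs]
    simp [abs_of_pos hρ]
  have hzμ : ∀ j, z j ≠ μ := by
    intro j h
    rw [← h, habsz j] at hμ
    exact lt_irrefl _ hμ
  have hden : (ρ : ℂ) ^ N - μ ^ N ≠ 0 := by
    have h1 : ‖μ ^ N‖ < ρ ^ N := by
      rw [norm_pow]
      exact pow_lt_pow_left₀ hμ (norm_nonneg μ) hN.ne'
    intro h
    rw [sub_eq_zero] at h
    have h2 : ‖(ρ : ℂ) ^ N‖ = ρ ^ N := by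
      rw [norm_pow, Complex.norm_of_nonneg hρ.le]
    rw [← h, h2] at h1
    exact lt_irrefl _ h1
  -- key per-term identity
  have key : ∀ j, z j ^ p * (z j / (z j - μ))
      = (∑ k ∈ Finset.range N, z j ^ (p + N - k) * μ ^ k) / ((ρ : ℂ) ^ N - μ ^ N) := by
    intro j
    have hsub : z j - μ ≠ 0 := sub_ne_zero.mpr (hzμ j)
    have h1 : ∑ k ∈ Finset.range N, z j ^ (p + N - k) * μ ^ k
        = z j ^ (p + 1) * ∑ k ∈ Finset.range N, μ ^ k * z j ^ (N - 1 - k) := by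
      rw [Finset.mul_sum]
      refine Finset.sum_congr rfl fun k hk => ?_
      rw [Finset.mem_range] at hk
      rw [show p + N - k = (p + 1) + (N - 1 - k) by omega, pow_add]
      ring
    have h2 : (∑ k ∈ Finset.range N, μ ^ k * z j ^ (N - 1 - k)) * (μ - z j)
        = μ ^ N - z j ^ N := geom_sum₂_mul μ (z j) N
    rw [hzN j] at h2
    rw [h1, eq_div_iff hden]
    field_simp
    linear_combination (z j) ^ (p + 1) * h2
  -- sum of powers of ζ
  have hsumpow : ∀ m : ℕ, 0 < m → ∑ j ∈ Finset.Icc 1 N, (ζ ^ m) ^ j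
      = if N ∣ m then (N : ℂ) else 0 := by
    intro m hm
    by_cases hdvd : N ∣ m
    · have : ζ ^ m = 1 := by
        obtain ⟨c, rfl⟩ := hdvd
        rw [pow_mul, hζN, one_pow]
      simp [this, hdvd, Nat.card_Icc]
    · have hne : ζ ^ m ≠ 1 := fun h => hdvd (hprim.dvd_of_pow_eq_one m h)
      have hpw : (ζ ^ m) ^ N = 1 := by rw [← pow_mul, mul_comm, pow_mul, hζN, one_pow]
      rw [icc_sum_eq_zero (ζ ^ m) hpw hne, if_neg hdvd]
  -- compute the full sum
  have hzpow : ∀ j m : ℕ, z j ^ m = (ρ : ℂ) ^ m * (ζ ^ m) ^ j := by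
    intro j m
    simp only [hzdef, mul_pow, ← pow_mul, mul_comm j m]
  have hsum : ∑ j ∈ Finset.Icc 1 N,
      ((ρ : ℂ) * Complex.exp (Complex.I * θ j)) ^ p *
        (((ρ : ℂ) * Complex.exp (Complex.I * θ j)) /
          ((ρ : ℂ) * Complex.exp (Complex.I * θ j) - μ))
      = (N : ℂ) * (ρ : ℂ) ^ N * μ ^ p / ((ρ : ℂ) ^ N - μ ^ N) := by
    have hrw : ∀ j ∈ Finset.Icc 1 N,
        ((ρ : ℂ) * Complex.exp (Complex.I * θ j)) ^ p *
          (((ρ : ℂ) * Complex.exp (Complex.I * θ j)) /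
            ((ρ : ℂ) * Complex.exp (Complex.I * θ j) - μ))
        = (∑ k ∈ Finset.range N, z j ^ (p + N - k) * μ ^ k) / ((ρ : ℂ) ^ N - μ ^ N) := by
      intro j _
      rw [hexp j]
      exact key j
    rw [Finset.sum_congr rfl hrw, ← Finset.sum_div]
    rw [Finset.sum_comm]
    have hinner : ∀ k ∈ Finset.range N,
        ∑ j ∈ Finset.Icc 1 N, z j ^ (p + N - k) * μ ^ k
        = (if k = p then (N : ℂ) * (ρ : ℂ) ^ N * μ ^ p else 0) := by
      intro k hk
      rw [Finset.mem_range] at hk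
      rw [← Finset.sum_mul]
      have : ∑ j ∈ Finset.Icc 1 N, z j ^ (p + N - k)
          = (ρ : ℂ) ^ (p + N - k) * ∑ j ∈ Finset.Icc 1 N, (ζ ^ (p + N - k)) ^ j := by
        rw [Finset.mul_sum]
        exact Finset.sum_congr rfl fun j _ => hzpow j _
      rw [this, hsumpow (p + N - k) (by omega)]
      by_cases hkp : k = p
      · have hdvd : N ∣ p + N - k := ⟨1, by omega⟩
        rw [if_pos hdvd, if_pos hkp, show p + N - k = N by omega, hkp]
        ring
      · rw [if_neg ?_, if_neg hkp]
        · ring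
        · rintro ⟨c, hc⟩
          have h2 : c < 2 := by
            by_contra hcon
            push_neg at hcon
            have : 2 * N ≤ N * c := by nlinarith
            omega
          interval_cases c <;> omega
    rw [Finset.sum_congr rfl hinner,
      Finset.sum_ite_eq' (Finset.range N) p (fun _ => (N : ℂ) * (ρ : ℂ) ^ N * μ ^ p),
      if_pos (Finset.mem_range.mpr hp)]
  rw [hsum]
  have h1 : (1 : ℂ) - (μ / ρ) ^ N = ((ρ : ℂ) ^ N - μ ^ N) / (ρ : ℂ) ^ N := by
    field_simp
    rw [sub_mul, div_pow, div_mul_cancel₀ _ (pow_ne_zero _ hρ0), one_mul]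
  rw [h1]
  field_simp
end

section
/- Let N ≥ 1 be an integer, θ_j = 2πj/N for j = 1,…,N, ρ > 0, and μ ∈ ℂ with |μ| > ρ. Then for any integer p with 0 ≤ p ≤ N - 1, (1/N) ∑_{j=1}^N (ρ e^{iθ_j})^p · (ρ e^{iθ_j})/(ρ e^{iθ_j} - μ) = -μ^p · (ρ/μ)^N / (1 - (ρ/μ)^N). -/
/-!
With `ζ` a primitive `N`-th root of unity the nodes are `z = r ζ ^ j`, and `z ^ N = r ^ N` at
every node. Hence `1 / (z - μ) = (∑_{k<N} z ^ k μ ^ (N-1-k)) / (r ^ N - μ ^ N)` there, which turns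
the summand into a polynomial in `z` of degree `< 2N` divided by a constant. Averaging over the
nodes kills every monomial `z ^ m` with `N ∤ m`; for `p < N` the only surviving exponent is
`m = N`, whose coefficient is `μ ^ p`.
-/

open Finset

section Field

variable {K : Type*} [Field K]

theorem sum_Icc_one_pow_eq_zero_of_pow_eq_one {w : K} {N : ℕ} (hw : w ≠ 1) (hwN : w ^ N = 1) :
    ∑ j ∈ Icc 1 N, w ^ j = 0 := by
  have hgeom : ∑ j ∈ range N, w ^ j = 0 := by
    have h := geom_sum_mul w N
    rw [hwN, sub_self] at h
    exact (mul_eq_zero.mp h).resolve_right (sub_ne_zero.mpr hw)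
  rw [← Ico_add_one_right_eq_Icc, sum_Ico_eq_sum_range, Nat.add_sub_cancel]
  simp only [pow_add, pow_one, ← mul_sum, hgeom, mul_zero]

theorem IsPrimitiveRoot.sum_Icc_pow_pow {ζ : K} {N : ℕ} (hζ : IsPrimitiveRoot ζ N) (m : ℕ) :
    ∑ j ∈ Icc 1 N, (ζ ^ j) ^ m = if N ∣ m then (N : K) else 0 := by
  simp_rw [← pow_mul, mul_comm _ m, pow_mul]
  split_ifs with hdvd
  · simp [(hζ.pow_eq_one_iff_dvd m).2 hdvd]
  · refine sum_Icc_one_pow_eq_zero_of_pow_eq_one (mt (hζ.pow_eq_one_iff_dvd m).1 hdvd) ?_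
    rw [← pow_mul, mul_comm, pow_mul, hζ.pow_eq_one, one_pow]

theorem pow_mul_div_sub_eq_sum_div {z μ c : K} {N : ℕ} (hzN : z ^ N = c) (hc : c ≠ μ ^ N)
    (p : ℕ) :
    z ^ p * (z / (z - μ)) =
      (∑ k ∈ range N, μ ^ (N - 1 - k) * z ^ (p + 1 + k)) / (c - μ ^ N) := by
  have hgeom := geom_sum₂_mul z μ N
  rw [hzN] at hgeom
  have hzμ : z - μ ≠ 0 := fun h => hc (sub_eq_zero.mp (by rw [← hgeom, h, mul_zero]))
  rw [eq_div_iff (sub_ne_zero.mpr hc), ← hgeom, sum_mul, mul_sum]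
  field_simp
  refine sum_congr rfl fun k _ => ?_
  ring

theorem sum_Icc_pow_mul_div_sub {ζ r μ : K} {N p : ℕ} (hζ : IsPrimitiveRoot ζ N)
    (hr : r ^ N ≠ μ ^ N) (hp : p < N) :
    ∑ j ∈ Icc 1 N, (r * ζ ^ j) ^ p * ((r * ζ ^ j) / (r * ζ ^ j - μ)) =
      N * r ^ N * μ ^ p / (r ^ N - μ ^ N) := by
  have hnode : ∀ j, (r * ζ ^ j) ^ N = r ^ N := fun j => by
    rw [mul_pow, ← pow_mul, mul_comm j, pow_mul, hζ.pow_eq_one, one_pow, mul_one]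
  simp only [pow_mul_div_sub_eq_sum_div (hnode _) hr, ← sum_div]
  rw [sum_comm]
  simp only [mul_pow, ← mul_sum, hζ.sum_Icc_pow_pow]
  rw [sum_eq_single_of_mem (N - 1 - p) (mem_range.mpr (by omega))]
  · rw [show p + 1 + (N - 1 - p) = N by omega, if_pos dvd_rfl,
      show N - 1 - (N - 1 - p) = p by omega]
    ring
  · intro k hk hkp
    have hk : k < N := mem_range.mp hk
    have hndvd : ¬ N ∣ p + 1 + k := fun hdvd => hkp <| by
      have := Nat.eq_of_dvd_of_lt_two_mul (by omega) hdvd (by omega)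
      omega
    rw [if_neg hndvd, mul_zero, mul_zero]

theorem div_sub_pow_eq_neg_div_one_sub {μ : K} (hμ : μ ≠ 0) (r a : K) (N : ℕ) :
    r ^ N * a / (r ^ N - μ ^ N) = -a * (r / μ) ^ N / (1 - (r / μ) ^ N) := by
  have hμN : μ ^ N ≠ 0 := pow_ne_zero N hμ
  rw [div_pow, one_sub_div hμN, mul_div_assoc', div_div_div_cancel_right₀ hμN, neg_mul, neg_div,
    ← div_neg, neg_sub, mul_comm a]

end Field

theorem Complex.exp_I_mul_two_pi_mul_div (N j : ℕ) :
    Complex.exp (Complex.I * ((2 * Real.pi * j / N : ℝ) : ℂ)) =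
      Complex.exp (2 * Real.pi * Complex.I / N) ^ j := by
  rw [← Complex.exp_nat_mul]
  push_cast
  ring_nf

theorem Complex.ofReal_pow_ne_pow_of_lt_norm {ρ : ℝ} {μ : ℂ} (hρ : 0 ≤ ρ) (hμ : ρ < ‖μ‖)
    {N : ℕ} (hN : N ≠ 0) : (ρ : ℂ) ^ N ≠ μ ^ N := by
  intro h
  have := congrArg norm h
  rw [norm_pow, norm_pow, Complex.norm_of_nonneg hρ] at this
  exact (pow_lt_pow_left₀ hμ hρ hN).ne this

theorem stmt3 (N : ℕ) (hN : 0 < N) (ρ : ℝ) (hρ : 0 < ρ) (μ : ℂ)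
    (hμ : ρ < ‖μ‖) (p : ℕ) (hp : p ≤ N - 1)
    (θ : ℕ → ℝ) (hθ : ∀ j, θ j = 2 * Real.pi * j / N) :
    (1 / N : ℂ) * ∑ j ∈ Finset.Icc 1 N,
        ((ρ : ℂ) * Complex.exp (Complex.I * θ j)) ^ p *
          (((ρ : ℂ) * Complex.exp (Complex.I * θ j)) /
            ((ρ : ℂ) * Complex.exp (Complex.I * θ j) - μ))
      = -μ ^ p * ((ρ : ℂ) / μ) ^ N / (1 - ((ρ : ℂ) / μ) ^ N) := by
  have hμ0 : μ ≠ 0 := norm_pos_iff.mp (hρ.trans hμ)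
  have hNC : (N : ℂ) ≠ 0 := Nat.cast_ne_zero.mpr hN.ne'
  simp only [hθ, Complex.exp_I_mul_two_pi_mul_div]
  rw [sum_Icc_pow_mul_div_sub (Complex.isPrimitiveRoot_exp N hN.ne')
      (Complex.ofReal_pow_ne_pow_of_lt_norm hρ.le hμ hN.ne') (by omega),
    ← div_sub_pow_eq_neg_div_one_sub hμ0, mul_assoc, mul_div_assoc, one_div,
    inv_mul_cancel_left₀ hNC]
end

section
/- Let A, B ∈ ℂ^{n×n} be Hermitian with B positive definite, z ∈ ℂ with Im z ≠ 0, b ∈ ℂⁿ, y* = (zB - A)^{-1} b, and ỹ ∈ ℂⁿ arbitrary with residual r̃ = b - (zB - A) ỹ. Then for every index i, |ỹ_i − y*_i| ≤ |Im z|^{-1} · λ_min(B)^{-1} · ‖r̃‖₂, where λ_min(B) is the smallest eigenvalue of B. -/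
/-!
Write `M = z • B - A` and let `e = ỹ - y*`, so that `M e = -r̃`. Since `A` and `B` are Hermitian,
`eᴴ A e` and `eᴴ B e` are real, hence `Im (eᴴ M e) = Im z · eᴴ B e`. Bounding `eᴴ B e` from below by
`λ_min(B) ‖e‖²` and `|eᴴ M e|` from above by `‖e‖ ‖r̃‖` (Cauchy–Schwarz) gives
`|Im z| λ_min(B) ‖e‖ ≤ ‖r̃‖`, and each coordinate of `e` is bounded by `‖e‖`.
-/

open Matrix
open scoped ComplexOrder MatrixOrder

namespace Matrix

variable {n 𝕜 : Type*} [Fintype n] [RCLike 𝕜]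

lemma re_star_dotProduct_self (x : n → 𝕜) :
    RCLike.re (star x ⬝ᵥ x) = ‖WithLp.toLp 2 x‖ ^ 2 := by
  rw [← inner_self_eq_norm_sq (𝕜 := 𝕜), EuclideanSpace.inner_toLp_toLp, dotProduct_comm]

lemma norm_star_dotProduct_le (x y : n → 𝕜) :
    ‖star x ⬝ᵥ y‖ ≤ ‖WithLp.toLp 2 x‖ * ‖WithLp.toLp 2 y‖ := by
  simpa only [EuclideanSpace.inner_toLp_toLp, dotProduct_comm]
    using norm_inner_le_norm (𝕜 := 𝕜) (WithLp.toLp 2 x) (WithLp.toLp 2 y)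

variable {A B : Matrix n n 𝕜}

lemma IsHermitian.im_star_dotProduct_smul_sub_mulVec_self (hA : A.IsHermitian) (hB : B.IsHermitian)
    (z : 𝕜) (x : n → 𝕜) :
    RCLike.im (star x ⬝ᵥ (z • B - A) *ᵥ x) = RCLike.im z * RCLike.re (star x ⬝ᵥ B *ᵥ x) := by
  simp [sub_mulVec, smul_mulVec, RCLike.mul_im, hA.im_star_dotProduct_mulVec_self,
    hB.im_star_dotProduct_mulVec_self]

variable [DecidableEq n]

lemma IsHermitian.algebraMap_iInf_eigenvalues_le (hB : B.IsHermitian) :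
    algebraMap ℝ (Matrix n n 𝕜) (⨅ i, hB.eigenvalues i) ≤ B := by
  rw [algebraMap_le_iff_le_spectrum hB.isSelfAdjoint, hB.spectrum_real_eq_range_eigenvalues]
  rintro _ ⟨i, rfl⟩
  exact ciInf_le (Set.finite_range _).bddBelow i

lemma IsHermitian.iInf_eigenvalues_mul_norm_sq_le (hB : B.IsHermitian) (x : n → 𝕜) :
    (⨅ i, hB.eigenvalues i) * ‖WithLp.toLp 2 x‖ ^ 2 ≤ RCLike.re (star x ⬝ᵥ B *ᵥ x) := by
  have h := (le_iff.mp hB.algebraMap_iInf_eigenvalues_le).re_dotProduct_nonneg x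
  rwa [sub_mulVec, dotProduct_sub, map_sub, sub_nonneg, Algebra.algebraMap_eq_smul_one,
    smul_mulVec, one_mulVec, dotProduct_smul, RCLike.smul_re, re_star_dotProduct_self] at h

lemma PosDef.iInf_eigenvalues_pos [Nonempty n] (hB : B.PosDef) :
    0 < ⨅ i, hB.1.eigenvalues i := by
  obtain ⟨j, hj⟩ := exists_eq_ciInf_of_finite (f := hB.1.eigenvalues)
  exact hj ▸ hB.eigenvalues_pos j

lemma abs_im_mul_iInf_eigenvalues_mul_norm_le (hA : A.IsHermitian) (hB : B.IsHermitian)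
    (z : 𝕜) (x : n → 𝕜) :
    |RCLike.im z| * (⨅ i, hB.eigenvalues i) * ‖WithLp.toLp 2 x‖
      ≤ ‖WithLp.toLp 2 ((z • B - A) *ᵥ x)‖ := by
  set μ := ⨅ i, hB.eigenvalues i
  have hsq : |RCLike.im z| * μ * ‖WithLp.toLp 2 x‖ ^ 2
      ≤ ‖WithLp.toLp 2 x‖ * ‖WithLp.toLp 2 ((z • B - A) *ᵥ x)‖ :=
    calc |RCLike.im z| * μ * ‖WithLp.toLp 2 x‖ ^ 2
        = |RCLike.im z| * (μ * ‖WithLp.toLp 2 x‖ ^ 2) := mul_assoc _ _ _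
      _ ≤ |RCLike.im z| * |RCLike.re (star x ⬝ᵥ B *ᵥ x)| := by
          gcongr
          exact (hB.iInf_eigenvalues_mul_norm_sq_le x).trans (le_abs_self _)
      _ = |RCLike.im (star x ⬝ᵥ (z • B - A) *ᵥ x)| := by
          rw [hA.im_star_dotProduct_smul_sub_mulVec_self hB, abs_mul]
      _ ≤ ‖star x ⬝ᵥ (z • B - A) *ᵥ x‖ := RCLike.abs_im_le_norm _
      _ ≤ _ := norm_star_dotProduct_le _ _
  rcases (norm_nonneg (WithLp.toLp 2 x)).eq_or_lt with h0 | hpos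
  · rw [← h0, mul_zero]
    exact norm_nonneg _
  · exact le_of_mul_le_mul_right (by linarith) hpos

end Matrix
theorem stmt7_general {n : Type*} [Fintype n] [DecidableEq n]
    (A B : Matrix n n ℂ) (hA : A.IsHermitian) (hB : B.PosDef)
    (z : ℂ) (hz : z.im ≠ 0) (b ytilde ystar : n → ℂ)
    (hy : (z • B - A).mulVec ystar = b)
    (r : n → ℂ) (hr : r = b - (z • B - A).mulVec ytilde) :
    ∀ i, ‖ytilde i - ystar i‖ ≤
      |z.im|⁻¹ * (⨅ i, hB.1.eigenvalues i)⁻¹ * ‖(WithLp.equiv 2 (n → ℂ)).symm r‖ := by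
  intro i
  have : Nonempty n := ⟨i⟩
  have hres : (z • B - A) *ᵥ (ytilde - ystar) = -r := by
    rw [mulVec_sub, hy, hr, neg_sub]
  have hbound := abs_im_mul_iInf_eigenvalues_mul_norm_le hA hB.1 z (ytilde - ystar)
  rw [hres, WithLp.toLp_neg, norm_neg] at hbound
  have hscale : 0 < |z.im| * ⨅ i, hB.1.eigenvalues i :=
    mul_pos (abs_pos.mpr hz) hB.iInf_eigenvalues_pos
  calc ‖ytilde i - ystar i‖ = ‖WithLp.toLp 2 (ytilde - ystar) i‖ := rfl
    _ ≤ ‖WithLp.toLp 2 (ytilde - ystar)‖ := PiLp.norm_apply_le _ i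
    _ ≤ (|z.im| * ⨅ i, hB.1.eigenvalues i)⁻¹ * ‖WithLp.toLp 2 r‖ := by
        rwa [le_inv_mul_iff₀ hscale]
    _ = _ := by rw [mul_inv]; rfl

theorem stmt7 {n : Type*} [Fintype n] [DecidableEq n] [Nonempty n]
    (A B : Matrix n n ℂ) (hA : A.IsHermitian) (hB : B.PosDef)
    (z : ℂ) (hz : z.im ≠ 0) (b ytilde ystar : n → ℂ)
    (hy : (z • B - A).mulVec ystar = b)
    (r : n → ℂ) (hr : r = b - (z • B - A).mulVec ytilde) :
    ∀ i, ‖ytilde i - ystar i‖ ≤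
      |z.im|⁻¹ * (⨅ i, hB.1.eigenvalues i)⁻¹ * ‖(WithLp.equiv 2 (n → ℂ)).symm r‖ :=
  stmt7_general A B hA hB z hz b ytilde ystar hy r hr
end
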